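/- arXiv:1712.04969 — 2 statements merged into one kernel-verified Lean document; each statement's English description precedes it below -/
import Mathlib

section
/- Let d₁* ∈ ℝ, c₁ ∈ [0,1], and define the coefficient functions by b₁(ν) = d₁*·cos((1−c₁)ν) and b̄₁(ν) = d₁*·(1−c₁)·sinc((1−c₁)ν) (the symplecticity condition). Let U : ℝ^d → ℝ be twice continuously differentiable and g = −∇U. Then the one-stage explicit ERKN integrator Φ_h is symplectic: at every point (q,p) ∈ ℝ^d × ℝ^d its derivative DΦ_h(q,p) preserves the canonical symplectic form, i.e. (DΦ_h(q,p))ᵀ J (DΦ_h(q,p)) = J, where J is the 2d×2d matrix with blocks J = [[0, I_d],[−I_d, 0]]. -/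
noncomputable section

/-- The (unnormalized) sinc function: `sinc x = sin x / x` for `x ≠ 0`, `sinc 0 = 1`. -/
def rsinc (x : ℝ) : ℝ := if x = 0 then 1 else Real.sin x / x

/-- Real coordinate space `ℝ^d` with the Euclidean norm. -/
abbrev Vec (d : ℕ) : Type := EuclideanSpace ℝ (Fin d)

/-- Block-diagonal scalar operator: multiplies the first `d₁` coordinates by `a`
and the remaining `d₂` coordinates by `b`.  This realizes `f(hΩ)` for
`Ω = diag(0·I_{d₁}, ω·I_{d₂})`, with `a = f 0` and `b = f (hω)`. -/
def bop (d₁ d₂ : ℕ) (a b : ℝ) (v : Vec (d₁ + d₂)) : Vec (d₁ + d₂) :=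
  WithLp.toLp 2 (fun i => (if (i : ℕ) < d₁ then a else b) * v i)

/-- One-stage explicit ERKN integrator `Φ_h` for `q'' + Ω²q = g(q)`:
`Q = cos(c₁hΩ)q + c₁h·sinc(c₁hΩ)p`,
`q⁺ = cos(hΩ)q + h·sinc(hΩ)p + h²·b̄₁(hΩ)g(Q)`,
`p⁺ = −hΩ²·sinc(hΩ)q + cos(hΩ)p + h·b₁(hΩ)g(Q)`. -/
def erkn (d₁ d₂ : ℕ) (h ω c₁ : ℝ) (bbar b₁ : ℝ → ℝ)
    (g : Vec (d₁ + d₂) → Vec (d₁ + d₂)) (x : Vec (d₁ + d₂) × Vec (d₁ + d₂)) :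
    Vec (d₁ + d₂) × Vec (d₁ + d₂) :=
  let q := x.1
  let p := x.2
  let Q := bop d₁ d₂ (Real.cos (c₁ * (h * 0))) (Real.cos (c₁ * (h * ω))) q
         + bop d₁ d₂ (c₁ * h * rsinc (c₁ * (h * 0))) (c₁ * h * rsinc (c₁ * (h * ω))) p
  ( bop d₁ d₂ (Real.cos (h * 0)) (Real.cos (h * ω)) q
    + bop d₁ d₂ (h * rsinc (h * 0)) (h * rsinc (h * ω)) p
    + bop d₁ d₂ (h ^ 2 * bbar (h * 0)) (h ^ 2 * bbar (h * ω)) (g Q),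
    bop d₁ d₂ (-(h * 0 ^ 2 * rsinc (h * 0))) (-(h * ω ^ 2 * rsinc (h * ω))) q
    + bop d₁ d₂ (Real.cos (h * 0)) (Real.cos (h * ω)) p
    + bop d₁ d₂ (h * b₁ (h * 0)) (h * b₁ (h * ω)) (g Q) )

/-!
With `b₁(ν) = d₁*·cos((1−c₁)ν)` and `b̄₁(ν) = d₁*·(1−c₁)·sinc((1−c₁)ν)` the integrator splits as
`Φ_h = L_{(1−c₁)h} ∘ K ∘ L_{c₁h}`, where `L_t` is the exact flow of `q'' + Ω²q = 0` and
`K(q, p) = (q, p − h d₁* ∇U(q))` is a kick; the splitting is the group law `L_s ∘ L_t = L_{s+t}`.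
Each factor is symplectic: `L_t` is built from commuting symmetric blocks with
`cos²(tω) + ω² (t sinc(tω))² = 1`, and the derivative of `K` is a shear by the negated
Hessian of `U`, which is symmetric.
-/

open Real ContinuousLinearMap
open scoped RealInnerProductSpace

section Symplectic

variable {E : Type*} [NormedAddCommGroup E] [InnerProductSpace ℝ E]

def symplecticForm (x y : E × E) : ℝ := ⟪x.1, y.2⟫ - ⟪x.2, y.1⟫

def IsSymplectic (D : E × E →L[ℝ] E × E) : Prop :=
  ∀ x y, symplecticForm (D x) (D y) = symplecticForm x y

lemma IsSymplectic.comp {D D' : E × E →L[ℝ] E × E} (hD' : IsSymplectic D')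
    (hD : IsSymplectic D) : IsSymplectic (D'.comp D) :=
  fun x y => (hD' (D x) (D y)).trans (hD x y)

lemma isSymplectic_shear {G : E →L[ℝ] E} (hG : (G : E →ₗ[ℝ] E).IsSymmetric) :
    IsSymplectic ((fst ℝ E E).prod (snd ℝ E E + G.comp (fst ℝ E E))) := by
  intro x y
  simp only [symplecticForm, prod_apply, add_apply, coe_comp, Function.comp_apply, coe_fst',
    coe_snd', inner_add_left, inner_add_right, hG.apply_clm x.1 y.1, ← sub_sub]
  ring

lemma isSymplectic_coprod_prod {C S B : E →L[ℝ] E} (hC : (C : E →ₗ[ℝ] E).IsSymmetric)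
    (hS : (S : E →ₗ[ℝ] E).IsSymmetric) (hB : (B : E →ₗ[ℝ] E).IsSymmetric)
    (hCS : Commute C S) (hCB : Commute C B) (hSB : Commute S B) (hdet : C * C - S * B = 1) :
    IsSymplectic ((C.coprod S).prod (B.coprod C)) := by
  have swap : ∀ {X Y : E →L[ℝ] E}, (X : E →ₗ[ℝ] E).IsSymmetric →
      (Y : E →ₗ[ℝ] E).IsSymmetric → Commute X Y → ∀ u v, ⟪X u, Y v⟫ = ⟪Y u, X v⟫ :=
    fun hX hY hXY u v => by
      rw [hX.apply_clm, ← mul_apply_eq_comp, hXY.eq, mul_apply_eq_comp, ← hY.apply_clm]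
  have unimodular : ∀ u v, ⟪C u, C v⟫ - ⟪S u, B v⟫ = ⟪u, v⟫ := fun u v => by
    rw [hC.apply_clm, hS.apply_clm, ← mul_apply_eq_comp, ← mul_apply_eq_comp,
      ← inner_sub_right, ← sub_apply, hdet, one_apply_eq_self]
  intro x y
  simp only [symplecticForm, prod_apply, coprod_apply, inner_add_left, inner_add_right]
  linear_combination unimodular x.1 y.2 - unimodular x.2 y.1 + swap hC hB hCB x.1 y.1
    + swap hS hB hSB x.1 y.2 - swap hC hS hCS x.2 y.2

end Symplectic

section Hessian

variable {E : Type*} [NormedAddCommGroup E] [InnerProductSpace ℝ E] [CompleteSpace E]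
  {U : E → ℝ}

lemma ContDiff.differentiable_gradient (hU : ContDiff ℝ 2 U) : Differentiable ℝ (gradient U) :=
  ((InnerProductSpace.toDual ℝ E).symm.contDiff.comp
    (hU.fderiv_right (m := 1) (by norm_num))).differentiable one_ne_zero

lemma inner_fderiv_gradient (hU : ContDiff ℝ 2 U) (x w z : E) :
    ⟪fderiv ℝ (gradient U) x w, z⟫ = fderiv ℝ (fderiv ℝ U) x w z := by
  have hU' : Differentiable ℝ (fderiv ℝ U) :=
    (hU.fderiv_right (m := 1) (by norm_num)).differentiable one_ne_zero
  have hpair : (fun y => ⟪gradient U y, z⟫) = fun y => fderiv ℝ U y z :=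
    funext fun y => InnerProductSpace.toDual_symm_apply
  have h := congrArg (fun f => fderiv ℝ f x w) hpair
  rw [fderiv_inner_apply ℝ (hU.differentiable_gradient x) (differentiableAt_const z),
    fderiv_clm_apply (hU' x) (differentiableAt_const z)] at h
  simpa using h

lemma isSymmetric_fderiv_gradient (hU : ContDiff ℝ 2 U) (x : E) :
    (fderiv ℝ (gradient U) x : E →ₗ[ℝ] E).IsSymmetric := fun w z => by
  rw [ContinuousLinearMap.coe_coe, inner_fderiv_gradient hU, real_inner_comm,
    inner_fderiv_gradient hU]
  exact (hU.contDiffAt.isSymmSndFDerivAt (by simp)) w z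

end Hessian

section Kick

variable {E : Type*} [NormedAddCommGroup E] [NormedSpace ℝ E]

def kick (g : E → E) (x : E × E) : E × E := (x.1, x.2 + g x.1)

lemma hasFDerivAt_kick {g : E → E} {G : E →L[ℝ] E} {x : E × E} (hg : HasFDerivAt g G x.1) :
    HasFDerivAt (kick g) ((fst ℝ E E).prod (snd ℝ E E + G.comp (fst ℝ E E))) x :=
  hasFDerivAt_fst.prodMk (hasFDerivAt_snd.add (hg.comp x hasFDerivAt_fst))

end Kick

section Block

variable {d₁ d₂ : ℕ}

lemma bop_apply (a b : ℝ) (v : Vec (d₁ + d₂)) (i : Fin (d₁ + d₂)) :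
    bop d₁ d₂ a b v i = (if (i : ℕ) < d₁ then a else b) * v i := rfl

-- The `i`-th diagonal entry of `Ω`.
variable (d₁ d₂) in
def freq (ω : ℝ) (i : Fin (d₁ + d₂)) : ℝ := if (i : ℕ) < d₁ then 0 else ω

lemma bop_apply_freq (f : ℝ → ℝ) (ω : ℝ) (v : Vec (d₁ + d₂)) (i : Fin (d₁ + d₂)) :
    bop d₁ d₂ (f 0) (f ω) v i = f (freq d₁ d₂ ω i) * v i := by
  rw [bop_apply, freq, apply_ite f]

variable (d₁ d₂) in
def bopL (a b : ℝ) : Vec (d₁ + d₂) →L[ℝ] Vec (d₁ + d₂) :=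
  LinearMap.toContinuousLinearMap
    { toFun := bop d₁ d₂ a b
      map_add' := fun x y => by ext i; simp only [bop_apply, PiLp.add_apply]; ring
      map_smul' := fun c x => by
        ext i; simp only [bop_apply, PiLp.smul_apply, smul_eq_mul, RingHom.id_apply]; ring }

@[simp] lemma bopL_apply (a b : ℝ) (v : Vec (d₁ + d₂)) : bopL d₁ d₂ a b v = bop d₁ d₂ a b v :=
  rfl

lemma bopL_mul (a b a' b' : ℝ) :
    bopL d₁ d₂ a b * bopL d₁ d₂ a' b' = bopL d₁ d₂ (a * a') (b * b') := by
  ext v i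
  simp only [mul_apply_eq_comp, bopL_apply, bop_apply]
  split_ifs <;> ring

lemma commute_bopL (a b a' b' : ℝ) : Commute (bopL d₁ d₂ a b) (bopL d₁ d₂ a' b') := by
  rw [Commute, SemiconjBy, bopL_mul, bopL_mul, mul_comm a, mul_comm b]

lemma isSymmetric_bopL (a b : ℝ) :
    (bopL d₁ d₂ a b : Vec (d₁ + d₂) →ₗ[ℝ] Vec (d₁ + d₂)).IsSymmetric := fun x y => by
  simp only [ContinuousLinearMap.coe_coe, bopL_apply, PiLp.inner_apply, bop_apply,
    RCLike.inner_apply, conj_trivial]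
  exact Finset.sum_congr rfl fun i _ => by ring

end Block

section FlowCoefficients

lemma mul_rsinc (x : ℝ) : x * rsinc x = sin x := by
  unfold rsinc
  split_ifs with hx
  · simp [hx]
  · field_simp

lemma flow_det (t w : ℝ) :
    cos (t * w) * cos (t * w) - t * rsinc (t * w) * -(t * w ^ 2 * rsinc (t * w)) = 1 := by
  linear_combination cos_sq_add_sin_sq (t * w)
    + (t * w * rsinc (t * w) + sin (t * w)) * mul_rsinc (t * w)

lemma flow_cos_add (s t w : ℝ) :
    cos (s * w) * cos (t * w) - s * rsinc (s * w) * (t * w ^ 2 * rsinc (t * w))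
      = cos ((s + t) * w) := by
  rw [add_mul, cos_add, ← mul_rsinc (s * w), ← mul_rsinc (t * w)]
  ring

lemma flow_sinc_add (s t w : ℝ) :
    cos (s * w) * (t * rsinc (t * w)) + s * rsinc (s * w) * cos (t * w)
      = (s + t) * rsinc ((s + t) * w) := by
  rcases eq_or_ne w 0 with rfl | hw
  · simp [rsinc]
    ring
  · refine mul_left_cancel₀ hw ?_
    have hsum : (s + t) * w * rsinc ((s + t) * w) = sin (s * w + t * w) := by
      rw [← add_mul, mul_rsinc]
    rw [sin_add, ← mul_rsinc (s * w), ← mul_rsinc (t * w)] at hsum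
    linear_combination -hsum

lemma flow_freq_add (s t w : ℝ) :
    s * w ^ 2 * rsinc (s * w) * cos (t * w) + cos (s * w) * (t * w ^ 2 * rsinc (t * w))
      = (s + t) * w ^ 2 * rsinc ((s + t) * w) := by
  have hsum : (s + t) * w * rsinc ((s + t) * w) = sin (s * w + t * w) := by
    rw [← add_mul, mul_rsinc]
  rw [sin_add, ← mul_rsinc (s * w), ← mul_rsinc (t * w)] at hsum
  linear_combination -w * hsum

end FlowCoefficients

section Flow

variable {d₁ d₂ : ℕ}

variable (d₁ d₂) in
def linFlow (ω t : ℝ) : Vec (d₁ + d₂) × Vec (d₁ + d₂) →L[ℝ] Vec (d₁ + d₂) × Vec (d₁ + d₂) :=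
  ((bopL d₁ d₂ (cos (t * 0)) (cos (t * ω))).coprod
      (bopL d₁ d₂ (t * rsinc (t * 0)) (t * rsinc (t * ω)))).prod
    ((bopL d₁ d₂ (-(t * 0 ^ 2 * rsinc (t * 0))) (-(t * ω ^ 2 * rsinc (t * ω)))).coprod
      (bopL d₁ d₂ (cos (t * 0)) (cos (t * ω))))

lemma linFlow_apply_fst (ω t : ℝ) (x : Vec (d₁ + d₂) × Vec (d₁ + d₂)) (i : Fin (d₁ + d₂)) :
    (linFlow d₁ d₂ ω t x).1 i = cos (t * freq d₁ d₂ ω i) * x.1 i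
      + t * rsinc (t * freq d₁ d₂ ω i) * x.2 i := by
  simp only [linFlow, prod_apply, coprod_apply, bopL_apply, PiLp.add_apply]
  rw [bop_apply_freq (fun w => cos (t * w)), bop_apply_freq (fun w => t * rsinc (t * w))]

lemma linFlow_apply_snd (ω t : ℝ) (x : Vec (d₁ + d₂) × Vec (d₁ + d₂)) (i : Fin (d₁ + d₂)) :
    (linFlow d₁ d₂ ω t x).2 i = -(t * freq d₁ d₂ ω i ^ 2 * rsinc (t * freq d₁ d₂ ω i)) * x.1 i
      + cos (t * freq d₁ d₂ ω i) * x.2 i := by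
  simp only [linFlow, prod_apply, coprod_apply, bopL_apply, PiLp.add_apply]
  rw [bop_apply_freq (fun w => -(t * w ^ 2 * rsinc (t * w))),
    bop_apply_freq (fun w => cos (t * w))]

lemma linFlow_comp (ω s t : ℝ) :
    (linFlow d₁ d₂ ω s).comp (linFlow d₁ d₂ ω t) = linFlow d₁ d₂ ω (s + t) := by
  refine ContinuousLinearMap.ext fun x => ?_
  refine Prod.ext (PiLp.ext fun i => ?_) (PiLp.ext fun i => ?_) <;>
    simp only [coe_comp, Function.comp_apply, linFlow_apply_fst, linFlow_apply_snd]
  · linear_combination x.1 i * flow_cos_add s t (freq d₁ d₂ ω i)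
      + x.2 i * flow_sinc_add s t (freq d₁ d₂ ω i)
  · linear_combination -x.1 i * flow_freq_add s t (freq d₁ d₂ ω i)
      + x.2 i * flow_cos_add s t (freq d₁ d₂ ω i)

lemma isSymplectic_linFlow (ω t : ℝ) : IsSymplectic (linFlow d₁ d₂ ω t) := by
  refine isSymplectic_coprod_prod (isSymmetric_bopL _ _) (isSymmetric_bopL _ _)
    (isSymmetric_bopL _ _) (commute_bopL _ _ _ _) (commute_bopL _ _ _ _)
    (commute_bopL _ _ _ _) ?_
  ext v i
  simp only [sub_apply, mul_apply_eq_comp, bopL_apply, one_apply_eq_self, PiLp.sub_apply,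
    bop_apply]
  split_ifs
  · linear_combination v i * flow_det t 0
  · linear_combination v i * flow_det t ω

lemma erkn_eq_linFlow_comp_kick (h ω c τ : ℝ) (g : Vec (d₁ + d₂) → Vec (d₁ + d₂)) :
    erkn d₁ d₂ h ω c (fun ν => τ * (1 - c) * rsinc ((1 - c) * ν))
        (fun ν => τ * cos ((1 - c) * ν)) g
      = linFlow d₁ d₂ ω ((1 - c) * h) ∘ kick (fun y => (h * τ) • g y)
          ∘ linFlow d₁ d₂ ω (c * h) := by
  funext x
  set Q := (linFlow d₁ d₂ ω (c * h) x).1 with hQ_def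
  have hQ : bop d₁ d₂ (cos (c * (h * 0))) (cos (c * (h * ω))) x.1
      + bop d₁ d₂ (c * h * rsinc (c * (h * 0))) (c * h * rsinc (c * (h * ω))) x.2 = Q := by
    simp only [hQ_def, linFlow, prod_apply, coprod_apply, bopL_apply, mul_assoc]
  have hkick : kick (fun y => (h * τ) • g y) (linFlow d₁ d₂ ω (c * h) x)
      = linFlow d₁ d₂ ω (c * h) x + (0, (h * τ) • g Q) := Prod.ext (add_zero _).symm rfl
  rw [Function.comp_apply, Function.comp_apply, hkick, map_add, ← comp_apply, linFlow_comp,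
    show (1 - c) * h + c * h = h by ring]
  simp only [erkn, hQ]
  refine Prod.ext (PiLp.ext fun i => ?_) (PiLp.ext fun i => ?_) <;>
    simp only [Prod.fst_add, Prod.snd_add, PiLp.add_apply, linFlow_apply_fst, linFlow_apply_snd]
  · rw [bop_apply_freq (fun w => cos (h * w)), bop_apply_freq (fun w => h * rsinc (h * w)),
      bop_apply_freq (fun w => h ^ 2 * (τ * (1 - c) * rsinc ((1 - c) * (h * w))))]
    simp only [WithLp.ofLp_zero, Pi.zero_apply, PiLp.smul_apply, smul_eq_mul, mul_assoc]
    ring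
  · rw [bop_apply_freq (fun w => -(h * w ^ 2 * rsinc (h * w))),
      bop_apply_freq (fun w => cos (h * w)),
      bop_apply_freq (fun w => h * (τ * cos ((1 - c) * (h * w))))]
    simp only [WithLp.ofLp_zero, Pi.zero_apply, PiLp.smul_apply, smul_eq_mul, mul_assoc]
    ring

end Flow

theorem erkn_symplectic_general (d₁ d₂ : ℕ) (h ω : ℝ)
    (d₁star c₁ : ℝ)
    (U : Vec (d₁ + d₂) → ℝ) (hU : ContDiff ℝ 2 U)
    (q p : Vec (d₁ + d₂)) :
    let Φ : Vec (d₁ + d₂) × Vec (d₁ + d₂) → Vec (d₁ + d₂) × Vec (d₁ + d₂) :=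
      erkn d₁ d₂ h ω c₁ (fun ν => d₁star * (1 - c₁) * rsinc ((1 - c₁) * ν))
        (fun ν => d₁star * Real.cos ((1 - c₁) * ν)) (fun x => -gradient U x)
    let D := fderiv ℝ Φ (q, p)
    ∀ u v : Vec (d₁ + d₂) × Vec (d₁ + d₂),
      (inner ℝ ((D u).1) ((D v).2) : ℝ) - (inner ℝ ((D u).2) ((D v).1) : ℝ)
        = (inner ℝ u.1 v.2 : ℝ) - (inner ℝ u.2 v.1 : ℝ) := by
  intro Φ D
  set L := linFlow d₁ d₂ ω (c₁ * h)
  set L' := linFlow d₁ d₂ ω ((1 - c₁) * h)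
  set Q := (L (q, p)).1
  set G := (h * d₁star) • -fderiv ℝ (gradient U) Q
  have hG : (G : Vec (d₁ + d₂) →ₗ[ℝ] Vec (d₁ + d₂)).IsSymmetric := fun x y => by
    simp only [G, coe_coe, smul_apply, neg_apply, real_inner_smul_left, real_inner_smul_right,
      inner_neg_left, inner_neg_right, (isSymmetric_fderiv_gradient hU Q).apply_clm]
  have hkick := hasFDerivAt_kick (g := fun y => (h * d₁star) • -gradient U y) (x := L (q, p))
    ((hU.differentiable_gradient Q).hasFDerivAt.neg.const_smul (h * d₁star))
  have hΦ := L'.hasFDerivAt.comp (q, p) (hkick.comp (q, p) L.hasFDerivAt)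
  rw [← erkn_eq_linFlow_comp_kick] at hΦ
  show IsSymplectic D
  rw [show D = _ from hΦ.fderiv]
  exact (isSymplectic_linFlow ω _).comp ((isSymplectic_shear hG).comp (isSymplectic_linFlow ω _))

/-- Under the symplecticity condition
`b₁(ν) = d₁*·cos((1−c₁)ν)`, `b̄₁(ν) = d₁*·(1−c₁)·sinc((1−c₁)ν)`, the ERKN integrator
with `g = −∇U` is symplectic: its derivative preserves the canonical symplectic
form `σ((q,p),(q',p')) = ⟨q,p'⟩ − ⟨p,q'⟩`. -/
theorem erkn_symplectic (d₁ d₂ : ℕ) (h ω : ℝ) (hh : 0 < h) (hω : 0 < ω)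
    (d₁star c₁ : ℝ) (hc₁ : c₁ ∈ Set.Icc (0 : ℝ) 1)
    (U : Vec (d₁ + d₂) → ℝ) (hU : ContDiff ℝ 2 U)
    (q p : Vec (d₁ + d₂)) :
    let Φ : Vec (d₁ + d₂) × Vec (d₁ + d₂) → Vec (d₁ + d₂) × Vec (d₁ + d₂) :=
      erkn d₁ d₂ h ω c₁ (fun ν => d₁star * (1 - c₁) * rsinc ((1 - c₁) * ν))
        (fun ν => d₁star * Real.cos ((1 - c₁) * ν)) (fun x => -gradient U x)
    let D := fderiv ℝ Φ (q, p)
    ∀ u v : Vec (d₁ + d₂) × Vec (d₁ + d₂),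
      (inner ℝ ((D u).1) ((D v).2) : ℝ) - (inner ℝ ((D u).2) ((D v).1) : ℝ)
        = (inner ℝ u.1 v.2 : ℝ) - (inner ℝ u.2 v.1 : ℝ) :=
  erkn_symplectic_general d₁ d₂ h ω d₁star c₁ U hU q p
end
end

section
/- Suppose c₁ = 1/2 and the function Υ : ℝ → ℝ satisfies (1/2)·sinc(ν/2)·Υ(ν) = b̄₁(ν) and cos(ν/2)·Υ(ν) = b₁(ν) for ν ∈ {0, hω}. Then for every g : ℝ^d → ℝ^d the one-stage explicit symmetric ERKN integrator Φ_h and the trigonometric integrator Φ̂_h = Φ_{h/2,NL} ∘ Φ_{h,L} ∘ Φ_{h/2,NL} are conjugate: Φ_h = Φ_{−h/2,L} ∘ Φ_{−h/2,NL} ∘ Φ̂_h ∘ Φ_{h/2,NL} ∘ Φ_{h/2,L} as maps on ℝ^d × ℝ^d. -/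
noncomputable section

/-- Exact time-`t` flow `Φ_{t,L}` of the linear equation `q̇ = p`, `ṗ = −Ω²q`. -/
def phiL (d₁ d₂ : ℕ) (ω t : ℝ) (x : Vec (d₁ + d₂) × Vec (d₁ + d₂)) :
    Vec (d₁ + d₂) × Vec (d₁ + d₂) :=
  ( bop d₁ d₂ (Real.cos (t * 0)) (Real.cos (t * ω)) x.1
    + bop d₁ d₂ (t * rsinc (t * 0)) (t * rsinc (t * ω)) x.2,
    bop d₁ d₂ (-(t * 0 ^ 2 * rsinc (t * 0))) (-(t * ω ^ 2 * rsinc (t * ω))) x.1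
    + bop d₁ d₂ (Real.cos (t * 0)) (Real.cos (t * ω)) x.2 )

/-- Time-`t` flow `Φ_{t,NL}` of the nonlinear equation `q̇ = 0`, `ṗ = Υ(hΩ)g(q)`. -/
def phiNL (d₁ d₂ : ℕ) (h ω : ℝ) (Υ : ℝ → ℝ) (g : Vec (d₁ + d₂) → Vec (d₁ + d₂))
    (t : ℝ) (x : Vec (d₁ + d₂) × Vec (d₁ + d₂)) :
    Vec (d₁ + d₂) × Vec (d₁ + d₂) :=
  (x.1, x.2 + bop d₁ d₂ (t * Υ (h * 0)) (t * Υ (h * ω)) (g x.1))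

/-!
Both split flows are one-parameter groups. Hence `Φ_{-h/2,NL}` cancels the outer half-kick of
`Φ̂_h`, the two inner half-kicks merge into `Φ_{h,NL}`, and `Φ_{-h/2,L} ∘ Φ_{h,L} = Φ_{h/2,L}`: the
right-hand side is the Strang splitting `Φ_{h/2,L} ∘ Φ_{h,NL} ∘ Φ_{h/2,L}`. As `Φ_{h/2,L}` is
linear, this is `Φ_{h,L}` plus `Φ_{h/2,L}(0, hΥ(hΩ)g(Q))`, where `Q`, the position after half a
linear step, is the ERKN stage value for `c₁ = 1/2`; the hypotheses on `Υ` say exactly that this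
kick carries the ERKN weights `h²b̄₁` and `hb₁`.
-/

lemma rsinc_eq_sinc : rsinc = Real.sinc := rfl

lemma mul_rsinc_self (x : ℝ) : x * rsinc x = Real.sin x := by
  rcases eq_or_ne x 0 with rfl | hx
  · simp
  · rw [rsinc_eq_sinc, Real.sinc_of_ne_zero hx]
    field_simp

lemma cos_add_mul_eq_rsinc (s t w : ℝ) :
    Real.cos ((s + t) * w) = Real.cos (s * w) * Real.cos (t * w)
      - s * w ^ 2 * rsinc (s * w) * (t * rsinc (t * w)) := by
  have hs := mul_rsinc_self (s * w)
  have ht := mul_rsinc_self (t * w)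
  rw [add_mul, Real.cos_add]
  linear_combination Real.sin (t * w) * hs + s * w * rsinc (s * w) * ht

lemma add_mul_rsinc_add_mul (s t w : ℝ) :
    (s + t) * rsinc ((s + t) * w) = s * rsinc (s * w) * Real.cos (t * w)
      + Real.cos (s * w) * (t * rsinc (t * w)) := by
  rcases eq_or_ne w 0 with rfl | hw
  · simp only [mul_zero, Real.cos_zero]
    ring
  refine mul_left_cancel₀ hw ?_
  have hs := mul_rsinc_self (s * w)
  have ht := mul_rsinc_self (t * w)
  have hst : (s + t) * w * rsinc ((s + t) * w)
      = Real.sin (s * w) * Real.cos (t * w) + Real.cos (s * w) * Real.sin (t * w) := by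
    rw [mul_rsinc_self, add_mul, Real.sin_add]
  linear_combination hst - Real.cos (t * w) * hs - Real.cos (s * w) * ht

section Blocks

variable {d₁ d₂ : ℕ}

lemma bop_add (a b : ℝ) (u v : Vec (d₁ + d₂)) :
    bop d₁ d₂ a b (u + v) = bop d₁ d₂ a b u + bop d₁ d₂ a b v := by
  ext i
  simp [bop, mul_add]

lemma bop_zero (a b : ℝ) : bop d₁ d₂ a b 0 = 0 := by
  ext i
  simp [bop]

lemma bop_bop (a b a' b' : ℝ) (v : Vec (d₁ + d₂)) :
    bop d₁ d₂ a b (bop d₁ d₂ a' b' v) = bop d₁ d₂ (a * a') (b * b') v := by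
  ext i
  simp only [bop, PiLp.toLp_apply]
  split <;> ring

lemma bop_congr_of_mem_pair {ω : ℝ} {f f' : ℝ → ℝ} (hf : ∀ w ∈ ({0, ω} : Set ℝ), f w = f' w)
    (v : Vec (d₁ + d₂)) : bop d₁ d₂ (f 0) (f ω) v = bop d₁ d₂ (f' 0) (f' ω) v := by
  rw [hf 0 (by simp), hf ω (by simp)]

end Blocks

section Flows

variable {d₁ d₂ : ℕ} {ω : ℝ}

lemma phiL_add (t : ℝ) (x y : Vec (d₁ + d₂) × Vec (d₁ + d₂)) :
    phiL d₁ d₂ ω t (x + y) = phiL d₁ d₂ ω t x + phiL d₁ d₂ ω t y := by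
  simp only [phiL, Prod.fst_add, Prod.snd_add, bop_add, Prod.mk_add_mk]
  abel_nf

lemma phiL_mk_zero (t : ℝ) (v : Vec (d₁ + d₂)) :
    phiL d₁ d₂ ω t (0, v) = (bop d₁ d₂ (t * rsinc (t * 0)) (t * rsinc (t * ω)) v,
      bop d₁ d₂ (Real.cos (t * 0)) (Real.cos (t * ω)) v) := by
  simp [phiL, bop_zero]

lemma phiL_phiL (s t : ℝ) (x : Vec (d₁ + d₂) × Vec (d₁ + d₂)) :
    phiL d₁ d₂ ω s (phiL d₁ d₂ ω t x) = phiL d₁ d₂ ω (s + t) x := by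
  refine Prod.ext ?_ ?_ <;> ext i <;> simp only [phiL, bop, PiLp.add_apply] <;> split_ifs
  · linear_combination x.1 i * (cos_add_mul_eq_rsinc s t 0).symm
      + x.2 i * (add_mul_rsinc_add_mul s t 0).symm
  · linear_combination x.1 i * (cos_add_mul_eq_rsinc s t ω).symm
      + x.2 i * (add_mul_rsinc_add_mul s t ω).symm
  · linear_combination (-(0 : ℝ) ^ 2 * x.1 i) * (add_mul_rsinc_add_mul s t 0).symm
      + x.2 i * (cos_add_mul_eq_rsinc s t 0).symm
  · linear_combination (-ω ^ 2 * x.1 i) * (add_mul_rsinc_add_mul s t ω).symm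
      + x.2 i * (cos_add_mul_eq_rsinc s t ω).symm

variable {h : ℝ} {Υ : ℝ → ℝ} {g : Vec (d₁ + d₂) → Vec (d₁ + d₂)}

lemma phiNL_eq_add (t : ℝ) (x : Vec (d₁ + d₂) × Vec (d₁ + d₂)) :
    phiNL d₁ d₂ h ω Υ g t x = x + (0, bop d₁ d₂ (t * Υ (h * 0)) (t * Υ (h * ω)) (g x.1)) :=
  Prod.ext (add_zero _).symm rfl

lemma phiNL_zero (x : Vec (d₁ + d₂) × Vec (d₁ + d₂)) : phiNL d₁ d₂ h ω Υ g 0 x = x := by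
  refine Prod.ext rfl ?_
  ext i
  simp [phiNL, bop]

lemma phiNL_phiNL (s t : ℝ) (x : Vec (d₁ + d₂) × Vec (d₁ + d₂)) :
    phiNL d₁ d₂ h ω Υ g s (phiNL d₁ d₂ h ω Υ g t x) = phiNL d₁ d₂ h ω Υ g (s + t) x := by
  refine Prod.ext rfl ?_
  ext i
  simp only [phiNL, bop, PiLp.add_apply]
  split <;> ring

end Flows

lemma erkn_eq_phiL_add {d₁ d₂ : ℕ} (h ω c₁ : ℝ) (bbar b₁ : ℝ → ℝ)
    (g : Vec (d₁ + d₂) → Vec (d₁ + d₂)) (x : Vec (d₁ + d₂) × Vec (d₁ + d₂)) :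
    erkn d₁ d₂ h ω c₁ bbar b₁ g x = phiL d₁ d₂ ω h x
      + (bop d₁ d₂ (h ^ 2 * bbar (h * 0)) (h ^ 2 * bbar (h * ω)) (g (phiL d₁ d₂ ω (c₁ * h) x).1),
        bop d₁ d₂ (h * b₁ (h * 0)) (h * b₁ (h * ω)) (g (phiL d₁ d₂ ω (c₁ * h) x).1)) := by
  simp only [erkn, phiL, Prod.mk_add_mk, mul_assoc]

theorem erkn_trig_conjugate_general (d₁ d₂ : ℕ) (h ω : ℝ)
    (bbar b₁ Υ : ℝ → ℝ)
    (hΥ₁ : ∀ ν ∈ ({0, h * ω} : Set ℝ), (1/2) * rsinc (ν / 2) * Υ ν = bbar ν)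
    (hΥ₂ : ∀ ν ∈ ({0, h * ω} : Set ℝ), Real.cos (ν / 2) * Υ ν = b₁ ν)
    (g : Vec (d₁ + d₂) → Vec (d₁ + d₂)) :
    let Φhat : Vec (d₁ + d₂) × Vec (d₁ + d₂) → Vec (d₁ + d₂) × Vec (d₁ + d₂) :=
      fun y => phiNL d₁ d₂ h ω Υ g (h/2) (phiL d₁ d₂ ω h (phiNL d₁ d₂ h ω Υ g (h/2) y))
    ∀ x : Vec (d₁ + d₂) × Vec (d₁ + d₂),
      erkn d₁ d₂ h ω (1/2) bbar b₁ g x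
        = phiL d₁ d₂ ω (-(h/2)) (phiNL d₁ d₂ h ω Υ g (-(h/2))
            (Φhat (phiNL d₁ d₂ h ω Υ g (h/2) (phiL d₁ d₂ ω (h/2) x)))) := by
  intro Φhat x
  have mem_pair {w : ℝ} (hw : w ∈ ({0, ω} : Set ℝ)) : h * w ∈ ({0, h * ω} : Set ℝ) := by
    rcases hw with rfl | rfl <;> simp
  have hq : ∀ w ∈ ({0, ω} : Set ℝ),
      h ^ 2 * bbar (h * w) = h / 2 * rsinc (h / 2 * w) * (h * Υ (h * w)) := by
    intro w hw
    rw [← hΥ₁ _ (mem_pair hw), show h * w / 2 = h / 2 * w by ring]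
    ring
  have hp : ∀ w ∈ ({0, ω} : Set ℝ),
      h * b₁ (h * w) = Real.cos (h / 2 * w) * (h * Υ (h * w)) := by
    intro w hw
    rw [← hΥ₂ _ (mem_pair hw), show h * w / 2 = h / 2 * w by ring]
    ring
  have strang : phiL d₁ d₂ ω (-(h/2)) (phiNL d₁ d₂ h ω Υ g (-(h/2))
      (Φhat (phiNL d₁ d₂ h ω Υ g (h/2) (phiL d₁ d₂ ω (h/2) x))))
        = phiL d₁ d₂ ω (h/2) (phiNL d₁ d₂ h ω Υ g h (phiL d₁ d₂ ω (h/2) x)) := by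
    simp only [Φhat, phiNL_phiNL, neg_add_cancel, add_halves, phiNL_zero, phiL_phiL,
      neg_add_eq_sub, sub_half]
  rw [strang, phiNL_eq_add, phiL_add, phiL_phiL, add_halves, phiL_mk_zero, bop_bop, bop_bop,
    erkn_eq_phiL_add, one_div_mul_eq_div,
    bop_congr_of_mem_pair (f := fun w => h ^ 2 * bbar (h * w)) hq,
    bop_congr_of_mem_pair (f := fun w => h * b₁ (h * w)) hp]

/-- The symmetric ERKN integrator and the trigonometric integrator
`Φ̂_h = Φ_{h/2,NL} ∘ Φ_{h,L} ∘ Φ_{h/2,NL}` are conjugate: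
`Φ_h = Φ_{−h/2,L} ∘ Φ_{−h/2,NL} ∘ Φ̂_h ∘ Φ_{h/2,NL} ∘ Φ_{h/2,L}`. -/
theorem erkn_trig_conjugate (d₁ d₂ : ℕ) (h ω : ℝ) (hh : 0 < h) (hω : 0 < ω)
    (bbar b₁ Υ : ℝ → ℝ)
    (hΥ₁ : ∀ ν ∈ ({0, h * ω} : Set ℝ), (1/2) * rsinc (ν / 2) * Υ ν = bbar ν)
    (hΥ₂ : ∀ ν ∈ ({0, h * ω} : Set ℝ), Real.cos (ν / 2) * Υ ν = b₁ ν)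
    (g : Vec (d₁ + d₂) → Vec (d₁ + d₂)) :
    let Φhat : Vec (d₁ + d₂) × Vec (d₁ + d₂) → Vec (d₁ + d₂) × Vec (d₁ + d₂) :=
      fun y => phiNL d₁ d₂ h ω Υ g (h/2) (phiL d₁ d₂ ω h (phiNL d₁ d₂ h ω Υ g (h/2) y))
    ∀ x : Vec (d₁ + d₂) × Vec (d₁ + d₂),
      erkn d₁ d₂ h ω (1/2) bbar b₁ g x
        = phiL d₁ d₂ ω (-(h/2)) (phiNL d₁ d₂ h ω Υ g (-(h/2))
            (Φhat (phiNL d₁ d₂ h ω Υ g (h/2) (phiL d₁ d₂ ω (h/2) x)))) :=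
  erkn_trig_conjugate_general d₁ d₂ h ω bbar b₁ Υ hΥ₁ hΥ₂ g
end
end
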